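/- Let 0 < α < 1, and let ξ be a nonnegative real random variable on a probability space (Ω, P) whose Laplace transform satisfies E[exp(−ω·ξ)] = 1/(1 + G_α(ω)) for all real ω ≥ 0. Then Var(ξ) = α/((1−α)²(2−α)). -/

import Mathlib

/-!
With `m = α / (1 - α)` and `c = α / (2 (2 - α))`, the Taylor bounds of `exp (-s)` turn
`G_α(ω) = m ω - α ∫₀¹ (e^{-ωu} - 1 + ωu) u^{-(1+α)} du` into `G_α(t) = m t - c t² + O(t³)`
as `t → 0+`, so the Laplace transform `1 / (1 + G_α(t)) = 1 - m t + (c + m²) t² + o(t²)`.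
For a nonnegative random variable these two coefficients are `-E ξ` and `E ξ² / 2`
(Fatou's lemma gives integrability, dominated convergence the values), hence
`Var ξ = 2 (c + m²) - m² = α / ((1 - α)² (2 - α))`.
-/

open Real MeasureTheory ProbabilityTheory

/-- For `0 < α < 1`, the function `G_α(ω) = α ∫_0^1 (1 - e^{-ωu}) u^{-(1+α)} du`. -/
noncomputable def Galpha (α ω : ℝ) : ℝ :=
  α * ∫ u in (0:ℝ)..1, (1 - Real.exp (-ω * u)) * u ^ (-(1 + α))

open Filter Topology Set

lemma le_of_hasDerivAt_le_of_nonneg {f g f' g' : ℝ → ℝ} (hf : ∀ x, HasDerivAt f (f' x) x)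
    (hg : ∀ x, HasDerivAt g (g' x) x) (h₀ : f 0 ≤ g 0) (hd : ∀ x, 0 ≤ x → f' x ≤ g' x)
    {x : ℝ} (hx : 0 ≤ x) : f x ≤ g x := by
  have hmono : MonotoneOn (g - f) (Ici 0) := by
    refine monotoneOn_of_hasDerivWithinAt_nonneg (convex_Ici 0)
      (fun y _ => ((hg y).continuousAt.sub (hf y).continuousAt).continuousWithinAt)
      (fun y _ => ((hg y).sub (hf y)).hasDerivWithinAt) fun y hy => ?_
    rw [interior_Ici] at hy
    exact sub_nonneg.2 (hd y hy.le)
  have := hmono self_mem_Ici hx hx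
  simp only [Pi.sub_apply] at this
  linarith

lemma Real.hasDerivAt_exp_neg (x : ℝ) : HasDerivAt (fun s => exp (-s)) (-exp (-x)) x := by
  simpa using (hasDerivAt_neg x).exp

lemma Real.exp_neg_le_one_sub_add_sq_div_two {s : ℝ} (hs : 0 ≤ s) :
    exp (-s) ≤ 1 - s + s ^ 2 / 2 := by
  refine le_of_hasDerivAt_le_of_nonneg (g := fun x => 1 - x + x ^ 2 / 2)
    (g' := fun x => -1 + x) hasDerivAt_exp_neg (fun x => ?_) (by simp) (fun x _ => ?_) hs
  · exact ((hasDerivAt_id x).const_sub 1).add ((hasDerivAt_pow 2 x).div_const 2) |>.congr_deriv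
      (by simp)
  · linarith [one_sub_le_exp_neg x]

lemma Real.one_sub_add_sq_div_two_sub_cube_div_six_le_exp_neg {s : ℝ} (hs : 0 ≤ s) :
    1 - s + s ^ 2 / 2 - s ^ 3 / 6 ≤ exp (-s) := by
  refine le_of_hasDerivAt_le_of_nonneg (f := fun x => 1 - x + x ^ 2 / 2 - x ^ 3 / 6)
    (f' := fun x => -1 + x - x ^ 2 / 2) (fun x => ?_) hasDerivAt_exp_neg (by simp)
    (fun x hx => ?_) hs
  · exact (((hasDerivAt_id x).const_sub 1).add ((hasDerivAt_pow 2 x).div_const 2)).sub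
      ((hasDerivAt_pow 3 x).div_const 6) |>.congr_deriv (by simp; ring)
  · linarith [exp_neg_le_one_sub_add_sq_div_two hx]

lemma tendsto_one_sub_exp_neg_mul_div (x : ℝ) :
    Tendsto (fun t => (1 - exp (-t * x)) / t) (𝓝[>] 0) (𝓝 x) := by
  have h := (((hasDerivAt_id (0 : ℝ)).neg.mul_const x).exp).tendsto_slope_zero_right.neg
  simpa [div_eq_inv_mul, mul_sub] using h

lemma tendsto_exp_neg_mul_sub_one_add_div_sq {x : ℝ} (hx : 0 ≤ x) :
    Tendsto (fun t => (exp (-t * x) - 1 + t * x) / t ^ 2) (𝓝[>] 0) (𝓝 (x ^ 2 / 2)) := by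
  have hlower : Tendsto (fun t => x ^ 2 / 2 - t * (x ^ 3 / 6)) (𝓝[>] 0) (𝓝 (x ^ 2 / 2)) := by
    refine (Continuous.tendsto' ?_ 0 _ (by simp)).mono_left nhdsWithin_le_nhds
    fun_prop
  refine tendsto_of_tendsto_of_tendsto_of_le_of_le' hlower tendsto_const_nhds ?_ ?_ <;>
    filter_upwards [self_mem_nhdsWithin] with t (ht : 0 < t) <;>
    rw [neg_mul]
  · rw [le_div_iff₀ (by positivity)]
    nlinarith [one_sub_add_sq_div_two_sub_cube_div_six_le_exp_neg (mul_nonneg ht.le hx)]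
  · rw [div_le_iff₀ (by positivity)]
    nlinarith [exp_neg_le_one_sub_add_sq_div_two (mul_nonneg ht.le hx)]

lemma tendsto_one_div_add_one_nhdsGT_zero :
    Tendsto (fun n : ℕ => 1 / ((n : ℝ) + 1)) atTop (𝓝[>] 0) :=
  tendsto_nhdsWithin_iff.2
    ⟨tendsto_one_div_add_atTop_nhds_zero_nat,
      Eventually.of_forall fun n => mem_Ioi.2 (by positivity)⟩

section Moments

variable {Ω : Type*} [MeasurableSpace Ω] {μ : Measure Ω}

lemma integrable_and_integral_eq_of_tendsto_of_le {ι : Type*} {l : Filter ι} [l.NeBot]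
    [l.IsCountablyGenerated] {F : ι → Ω → ℝ} {f : Ω → ℝ} {L : ℝ}
    (hF : ∀ i, Integrable (F i) μ) (hF₀ : ∀ i x, 0 ≤ F i x) (hFf : ∀ i x, F i x ≤ f x)
    (hlim : ∀ x, Tendsto (fun i => F i x) l (𝓝 (f x)))
    (hL : Tendsto (fun i => ∫ x, F i x ∂μ) l (𝓝 L)) :
    Integrable f μ ∧ ∫ x, f x ∂μ = L := by
  have hf_int : Integrable f μ := by
    refine ⟨aestronglyMeasurable_of_tendsto_ae l (fun i => (hF i).1) (ae_of_all _ hlim), ?_⟩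
    rw [hasFiniteIntegral_iff_ofReal
      (ae_of_all _ fun x => ge_of_tendsto' (hlim x) fun i => hF₀ i x)]
    calc ∫⁻ x, ENNReal.ofReal (f x) ∂μ
        = ∫⁻ x, liminf (fun i => ENNReal.ofReal (F i x)) l ∂μ :=
          lintegral_congr fun x => ((ENNReal.tendsto_ofReal (hlim x)).liminf_eq).symm
      _ ≤ liminf (fun i => ∫⁻ x, ENNReal.ofReal (F i x) ∂μ) l :=
          lintegral_liminf_le' fun i => (hF i).1.aemeasurable.ennreal_ofReal
      _ = ENNReal.ofReal L := by
          simp_rw [← ofReal_integral_eq_lintegral_ofReal (hF _) (ae_of_all _ (hF₀ _))]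
          exact (ENNReal.tendsto_ofReal hL).liminf_eq
      _ < ⊤ := ENNReal.ofReal_lt_top
  refine ⟨hf_int, tendsto_nhds_unique ?_ hL⟩
  refine tendsto_integral_filter_of_dominated_convergence f
    (Eventually.of_forall fun i => (hF i).1)
    (Eventually.of_forall fun i => ae_of_all _ fun x => ?_) hf_int (ae_of_all _ hlim)
  rw [norm_of_nonneg (hF₀ i x)]
  exact hFf i x

lemma integrable_exp_neg_mul [IsFiniteMeasure μ] {ξ : Ω → ℝ} (hξ : AEMeasurable ξ μ)
    (hξ₀ : ∀ x, 0 ≤ ξ x) {t : ℝ} (ht : 0 ≤ t) : Integrable (fun x => exp (-t * ξ x)) μ := by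
  refine Integrable.of_bound (by fun_prop) 1 (ae_of_all _ fun x => ?_)
  rw [norm_of_nonneg (exp_pos _).le, exp_le_one_iff, neg_mul, neg_nonpos]
  exact mul_nonneg ht (hξ₀ x)

variable [IsProbabilityMeasure μ] {ξ : Ω → ℝ}

theorem integrable_and_integral_eq_of_tendsto_laplace (hξ : AEMeasurable ξ μ)
    (hξ₀ : ∀ x, 0 ≤ ξ x) {m : ℝ}
    (h : Tendsto (fun t => (1 - ∫ x, exp (-t * ξ x) ∂μ) / t) (𝓝[>] 0) (𝓝 m)) :
    Integrable ξ μ ∧ ∫ x, ξ x ∂μ = m := by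
  -- Fatou's lemma needs every quotient to be integrable and nonnegative, which fails for `t ≤ 0`,
  -- so we pass from `𝓝[>] 0` to the sequence `1 / (n + 1)`.
  have ht := tendsto_one_div_add_one_nhdsGT_zero
  set t : ℕ → ℝ := fun n => 1 / ((n : ℝ) + 1)
  have htpos : ∀ n, 0 < t n := fun n => by positivity
  have hexp n := integrable_exp_neg_mul hξ hξ₀ (htpos n).le
  set F : ℕ → Ω → ℝ := fun n x => (1 - exp (-t n * ξ x)) / t n
  have hF_nonneg n x : 0 ≤ F n x := by
    refine div_nonneg (sub_nonneg.2 ?_) (htpos n).le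
    rw [exp_le_one_iff, neg_mul, neg_nonpos]
    exact mul_nonneg (htpos n).le (hξ₀ x)
  have hF_le n x : F n x ≤ ξ x := by
    rw [div_le_iff₀ (htpos n), neg_mul]
    linarith [one_sub_le_exp_neg (t n * ξ x)]
  have hF_integral n : ∫ x, F n x ∂μ = (1 - ∫ x, exp (-t n * ξ x) ∂μ) / t n := by
    rw [integral_div, integral_sub (integrable_const 1) (hexp n)]
    simp
  exact integrable_and_integral_eq_of_tendsto_of_le
    (fun n => ((integrable_const 1).sub (hexp n)).div_const _) hF_nonneg hF_le
    (fun x => (tendsto_one_sub_exp_neg_mul_div (ξ x)).comp ht)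
    ((h.comp ht).congr fun n => (hF_integral n).symm)

theorem integrable_sq_and_integral_sq_eq_of_tendsto_laplace (hξ : Integrable ξ μ)
    (hξ₀ : ∀ x, 0 ≤ ξ x) {s : ℝ}
    (h : Tendsto (fun t => (∫ x, exp (-t * ξ x) ∂μ - 1 + t * ∫ x, ξ x ∂μ) / t ^ 2)
      (𝓝[>] 0) (𝓝 s)) :
    Integrable (fun x => ξ x ^ 2) μ ∧ ∫ x, ξ x ^ 2 ∂μ = 2 * s := by
  have ht := tendsto_one_div_add_one_nhdsGT_zero
  set t : ℕ → ℝ := fun n => 1 / ((n : ℝ) + 1)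
  have htpos : ∀ n, 0 < t n := fun n => by positivity
  have hexp n := integrable_exp_neg_mul hξ.aemeasurable hξ₀ (htpos n).le
  have hexp_sub n : Integrable (fun x => exp (-t n * ξ x) - 1) μ :=
    (hexp n).sub (integrable_const 1)
  set F : ℕ → Ω → ℝ := fun n x => (exp (-t n * ξ x) - 1 + t n * ξ x) / t n ^ 2
  have hF_nonneg n x : 0 ≤ F n x := by
    refine div_nonneg ?_ (by positivity)
    rw [neg_mul]
    linarith [one_sub_le_exp_neg (t n * ξ x)]
  have hF_le n x : F n x ≤ ξ x ^ 2 / 2 := by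
    rw [div_le_iff₀ (by positivity), neg_mul]
    nlinarith [exp_neg_le_one_sub_add_sq_div_two (mul_nonneg (htpos n).le (hξ₀ x))]
  have hF_integral n : ∫ x, F n x ∂μ =
      (∫ x, exp (-t n * ξ x) ∂μ - 1 + t n * ∫ x, ξ x ∂μ) / t n ^ 2 := by
    rw [integral_div, integral_add (hexp_sub n) (hξ.const_mul _),
      integral_sub (hexp n) (integrable_const 1), integral_const_mul]
    simp
  obtain ⟨hint, hval⟩ := integrable_and_integral_eq_of_tendsto_of_le
    (fun n => ((hexp_sub n).add (hξ.const_mul _)).div_const _)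
    hF_nonneg hF_le (fun x => (tendsto_exp_neg_mul_sub_one_add_div_sq (hξ₀ x)).comp ht)
    ((h.comp ht).congr fun n => (hF_integral n).symm)
  have hsq : (fun x => ξ x ^ 2) = fun x => 2 * (ξ x ^ 2 / 2) := by
    ext x
    ring
  rw [hsq, integral_const_mul, hval]
  exact ⟨hint.const_mul 2, rfl⟩

end Moments

lemma intervalIntegrable_mul_rpow_zero_one (c : ℝ) {β : ℝ} (hβ : -1 < β) :
    IntervalIntegrable (fun u => c * u ^ β) volume 0 1 :=
  (intervalIntegral.intervalIntegrable_rpow' hβ).const_mul c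

lemma integral_mul_rpow_zero_one (c : ℝ) {β : ℝ} (hβ : -1 < β) :
    ∫ u in (0:ℝ)..1, c * u ^ β = c / (β + 1) := by
  rw [intervalIntegral.integral_const_mul, integral_rpow (Or.inl hβ),
    zero_rpow (by linarith), one_rpow]
  ring

section Galpha

variable {α : ℝ}

noncomputable def GalphaRemainderIntegrand (α ω u : ℝ) : ℝ :=
  (exp (-ω * u) - 1 + ω * u) * u ^ (-(1 + α))

lemma mul_pow_mul_rpow_neg_one_sub {u : ℝ} (hu : 0 < u) (ω : ℝ) (k : ℕ) :
    (ω * u) ^ k * u ^ (-(1 + α)) = ω ^ k * u ^ ((k : ℝ) - 1 - α) := by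
  rw [mul_pow, mul_assoc, ← rpow_natCast u k, ← rpow_add hu]
  ring_nf

lemma GalphaRemainderIntegrand_nonneg {ω u : ℝ} (hu : 0 < u) :
    0 ≤ GalphaRemainderIntegrand α ω u := by
  have h := one_sub_le_exp_neg (ω * u)
  exact mul_nonneg (by rw [neg_mul]; linarith) (rpow_pos_of_pos hu _).le

lemma GalphaRemainderIntegrand_le {ω u : ℝ} (hω : 0 ≤ ω) (hu : 0 < u) :
    GalphaRemainderIntegrand α ω u ≤ ω ^ 2 / 2 * u ^ (1 - α) := by
  have h := exp_neg_le_one_sub_add_sq_div_two (mul_nonneg hω hu.le)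
  calc GalphaRemainderIntegrand α ω u ≤ (ω * u) ^ 2 / 2 * u ^ (-(1 + α)) := by
        rw [GalphaRemainderIntegrand, neg_mul]
        exact mul_le_mul_of_nonneg_right (by linarith) (rpow_pos_of_pos hu _).le
    _ = ω ^ 2 / 2 * u ^ (1 - α) := by
        have e2 := mul_pow_mul_rpow_neg_one_sub (α := α) hu ω 2
        rw [Nat.cast_ofNat, show (2 : ℝ) - 1 - α = 1 - α by ring] at e2
        linear_combination e2 / 2

lemma le_GalphaRemainderIntegrand {ω u : ℝ} (hω : 0 ≤ ω) (hu : 0 < u) :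
    ω ^ 2 / 2 * u ^ (1 - α) - ω ^ 3 / 6 * u ^ (2 - α) ≤ GalphaRemainderIntegrand α ω u := by
  have h := one_sub_add_sq_div_two_sub_cube_div_six_le_exp_neg (mul_nonneg hω hu.le)
  calc ω ^ 2 / 2 * u ^ (1 - α) - ω ^ 3 / 6 * u ^ (2 - α)
        = ((ω * u) ^ 2 / 2 - (ω * u) ^ 3 / 6) * u ^ (-(1 + α)) := by
        have e2 := mul_pow_mul_rpow_neg_one_sub (α := α) hu ω 2
        have e3 := mul_pow_mul_rpow_neg_one_sub (α := α) hu ω 3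
        rw [Nat.cast_ofNat, show (2 : ℝ) - 1 - α = 1 - α by ring] at e2
        rw [Nat.cast_ofNat, show (3 : ℝ) - 1 - α = 2 - α by ring] at e3
        linear_combination (-1 / 2) * e2 + (1 / 6) * e3
    _ ≤ GalphaRemainderIntegrand α ω u := by
        rw [GalphaRemainderIntegrand, neg_mul]
        exact mul_le_mul_of_nonneg_right (by linarith) (rpow_pos_of_pos hu _).le

lemma intervalIntegrable_GalphaRemainderIntegrand (hα : α < 1) {ω : ℝ} (hω : 0 ≤ ω) :
    IntervalIntegrable (GalphaRemainderIntegrand α ω) volume 0 1 := by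
  rw [intervalIntegrable_iff_integrableOn_Ioc_of_le zero_le_one]
  refine integrable_of_le_of_le (by unfold GalphaRemainderIntegrand; fun_prop)
    ((ae_restrict_iff' measurableSet_Ioc).2 (ae_of_all _ fun u hu => ?_))
    ((ae_restrict_iff' measurableSet_Ioc).2 (ae_of_all _ fun u hu => ?_))
    (integrable_zero _ _ _)
    (intervalIntegrable_mul_rpow_zero_one (ω ^ 2 / 2) (β := 1 - α) (by linarith)).1
  · exact GalphaRemainderIntegrand_nonneg hu.1
  · exact GalphaRemainderIntegrand_le hω hu.1

lemma sub_Galpha_eq_mul_integral (hα : α < 1) {ω : ℝ} (hω : 0 ≤ ω) :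
    α / (1 - α) * ω - Galpha α ω = α * ∫ u in (0:ℝ)..1, GalphaRemainderIntegrand α ω u := by
  have hG : Galpha α ω = α * ∫ u in (0:ℝ)..1, (ω * u ^ (-α) - GalphaRemainderIntegrand α ω u) := by
    rw [Galpha]
    congr 1
    refine intervalIntegral.integral_congr_ae (ae_of_all _ fun u hu => ?_)
    rw [uIoc_of_le zero_le_one] at hu
    have e1 := mul_pow_mul_rpow_neg_one_sub (α := α) hu.1 ω 1
    rw [Nat.cast_one, pow_one, pow_one, show (1 : ℝ) - 1 - α = -α by ring] at e1
    rw [GalphaRemainderIntegrand]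
    linear_combination e1
  rw [hG, intervalIntegral.integral_sub
    (intervalIntegrable_mul_rpow_zero_one ω (by linarith))
    (intervalIntegrable_GalphaRemainderIntegrand hα hω),
    integral_mul_rpow_zero_one ω (by linarith)]
  ring_nf

lemma sub_Galpha_le (hα₀ : 0 ≤ α) (hα₁ : α < 1) {ω : ℝ} (hω : 0 ≤ ω) :
    α / (1 - α) * ω - Galpha α ω ≤ α / (2 * (2 - α)) * ω ^ 2 := by
  have h := intervalIntegral.integral_mono_on_of_le_Ioo zero_le_one
    (intervalIntegrable_GalphaRemainderIntegrand hα₁ hω)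
    (intervalIntegrable_mul_rpow_zero_one _ (β := 1 - α) (by linarith))
    fun u hu => GalphaRemainderIntegrand_le hω hu.1
  rw [integral_mul_rpow_zero_one _ (by linarith), show 1 - α + 1 = 2 - α by ring] at h
  calc α / (1 - α) * ω - Galpha α ω ≤ α * (ω ^ 2 / 2 / (2 - α)) := by
        rw [sub_Galpha_eq_mul_integral hα₁ hω]
        gcongr
    _ = α / (2 * (2 - α)) * ω ^ 2 := by field_simp

lemma le_sub_Galpha (hα₀ : 0 ≤ α) (hα₁ : α < 1) {ω : ℝ} (hω : 0 ≤ ω) :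
    α / (2 * (2 - α)) * ω ^ 2 - α / (6 * (3 - α)) * ω ^ 3 ≤ α / (1 - α) * ω - Galpha α ω := by
  have hi₁ := intervalIntegrable_mul_rpow_zero_one (ω ^ 2 / 2) (β := 1 - α) (by linarith)
  have hi₂ := intervalIntegrable_mul_rpow_zero_one (ω ^ 3 / 6) (β := 2 - α) (by linarith)
  have h := intervalIntegral.integral_mono_on_of_le_Ioo zero_le_one (hi₁.sub hi₂)
    (intervalIntegrable_GalphaRemainderIntegrand hα₁ hω)
    fun u hu => le_GalphaRemainderIntegrand hω hu.1
  rw [intervalIntegral.integral_sub hi₁ hi₂, integral_mul_rpow_zero_one _ (by linarith),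
    integral_mul_rpow_zero_one _ (by linarith), show 1 - α + 1 = 2 - α by ring,
    show 2 - α + 1 = 3 - α by ring] at h
  calc α / (2 * (2 - α)) * ω ^ 2 - α / (6 * (3 - α)) * ω ^ 3
      = α * (ω ^ 2 / 2 / (2 - α) - ω ^ 3 / 6 / (3 - α)) := by field_simp
    _ ≤ α / (1 - α) * ω - Galpha α ω := by
        rw [sub_Galpha_eq_mul_integral hα₁ hω]
        gcongr

end Galpha

section Limits

variable {α : ℝ} (hα₀ : 0 ≤ α) (hα₁ : α < 1)
include hα₀ hα₁

lemma tendsto_sub_Galpha_div_sq :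
    Tendsto (fun t => (α / (1 - α) * t - Galpha α t) / t ^ 2) (𝓝[>] 0)
      (𝓝 (α / (2 * (2 - α)))) := by
  have hlower : Tendsto (fun t => α / (2 * (2 - α)) - α / (6 * (3 - α)) * t) (𝓝[>] 0)
      (𝓝 (α / (2 * (2 - α)))) :=
    (Continuous.tendsto' (by fun_prop) 0 _ (by simp)).mono_left nhdsWithin_le_nhds
  refine tendsto_of_tendsto_of_tendsto_of_le_of_le' hlower tendsto_const_nhds ?_ ?_ <;>
    filter_upwards [self_mem_nhdsWithin] with t (ht : 0 < t)
  · rw [le_div_iff₀ (by positivity)]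
    nlinarith [le_sub_Galpha hα₀ hα₁ ht.le]
  · rw [div_le_iff₀ (by positivity)]
    exact sub_Galpha_le hα₀ hα₁ ht.le

lemma tendsto_Galpha_div :
    Tendsto (fun t => Galpha α t / t) (𝓝[>] 0) (𝓝 (α / (1 - α))) := by
  have h := ((tendsto_nhdsWithin_of_tendsto_nhds (tendsto_id (x := 𝓝 (0 : ℝ)))).mul
    (tendsto_sub_Galpha_div_sq hα₀ hα₁)).const_sub (α / (1 - α))
  rw [zero_mul, sub_zero] at h
  refine h.congr' (eventually_nhdsWithin_of_forall fun t (ht : 0 < t) => ?_)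
  have : 1 - α ≠ 0 := by linarith
  simp only [id]
  field_simp
  ring

lemma tendsto_Galpha : Tendsto (Galpha α) (𝓝[>] 0) (𝓝 0) := by
  have h := (tendsto_nhdsWithin_of_tendsto_nhds (tendsto_id (x := 𝓝 (0 : ℝ)))).mul
    (tendsto_Galpha_div hα₀ hα₁)
  rw [zero_mul] at h
  refine h.congr' (eventually_nhdsWithin_of_forall fun t (ht : 0 < t) => ?_)
  simp only [id]
  field_simp

lemma eventually_one_add_Galpha_ne_zero : ∀ᶠ t in 𝓝[>] 0, 1 + Galpha α t ≠ 0 :=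
  ((tendsto_Galpha hα₀ hα₁).const_add 1).eventually_ne (by norm_num)

lemma tendsto_one_sub_inv_one_add_Galpha_div :
    Tendsto (fun t => (1 - 1 / (1 + Galpha α t)) / t) (𝓝[>] 0) (𝓝 (α / (1 - α))) := by
  have h := (tendsto_Galpha_div hα₀ hα₁).div ((tendsto_Galpha hα₀ hα₁).const_add 1)
    (by norm_num)
  rw [add_zero, div_one] at h
  refine h.congr' ((eventually_one_add_Galpha_ne_zero hα₀ hα₁).mono fun t ht => ?_)
  simp only [Pi.div_apply]
  field_simp
  ring

lemma tendsto_inv_one_add_Galpha_sub_one_add_div_sq :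
    Tendsto (fun t => (1 / (1 + Galpha α t) - 1 + t * (α / (1 - α))) / t ^ 2) (𝓝[>] 0)
      (𝓝 (α / (2 * (2 - α)) + (α / (1 - α)) ^ 2)) := by
  have h := ((tendsto_sub_Galpha_div_sq hα₀ hα₁).add
    ((tendsto_Galpha_div hα₀ hα₁).const_mul (α / (1 - α)))).div
    ((tendsto_Galpha hα₀ hα₁).const_add 1) (by norm_num)
  rw [add_zero, div_one, ← sq] at h
  refine h.congr' ((eventually_one_add_Galpha_ne_zero hα₀ hα₁).mono fun t ht => ?_)
  simp only [Pi.div_apply]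
  field_simp
  ring

end Limits

/-- Equation (4.12): if ξ has Laplace transform `1/(1 + G_α)` then
`Var(ξ) = α/((1-α)²(2-α))`. -/
theorem variance_of_G_alpha_law (α : ℝ) (hα0 : 0 < α) (hα1 : α < 1)
    {Ω : Type*} [MeasurableSpace Ω] (P : Measure Ω) [IsProbabilityMeasure P]
    (ξ : Ω → ℝ) (hmeas : Measurable ξ) (hnonneg : ∀ x, 0 ≤ ξ x)
    (hlaplace : ∀ ω : ℝ, 0 ≤ ω → (∫ x, Real.exp (-ω * ξ x) ∂P) = 1 / (1 + Galpha α ω)) :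
    variance ξ P = α / ((1 - α) ^ 2 * (2 - α)) := by
  have hα : 0 ≤ α := hα0.le
  have hlaplace' : ∀ᶠ t in 𝓝[>] 0, ∫ x, exp (-t * ξ x) ∂P = 1 / (1 + Galpha α t) :=
    eventually_nhdsWithin_of_forall fun t ht => hlaplace t (le_of_lt ht)
  obtain ⟨hint, hmean⟩ :=
    integrable_and_integral_eq_of_tendsto_laplace (μ := P) hmeas.aemeasurable hnonneg
    ((tendsto_one_sub_inv_one_add_Galpha_div hα hα1).congr'
      (hlaplace'.mono fun t ht => by simp only [ht]))
  obtain ⟨hint_sq, hmean_sq⟩ := integrable_sq_and_integral_sq_eq_of_tendsto_laplace hint hnonneg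
    ((tendsto_inv_one_add_Galpha_sub_one_add_div_sq hα hα1).congr'
      (hlaplace'.mono fun t ht => by simp only [ht, hmean]))
  rw [variance_eq_sub ((memLp_two_iff_integrable_sq hint.1).2 hint_sq)]
  simp only [Pi.pow_apply]
  rw [hmean_sq, hmean]
  have : 1 - α ≠ 0 := by linarith
  have : 2 - α ≠ 0 := by linarith
  field_simp
  ring
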